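/- arXiv:1809.02389 — 2 statements merged into one kernel-verified Lean document; each statement's English description precedes it below -/
import Mathlib

section
/- For every strict partition λ, the multiset of type B hook lengths {h^B(u) : u ∈ [λ]^B} equals the multiset of type D hook lengths {h^D(u) : u ∈ [λ]^D}; in other words, one is a permutation of the other. -/
attribute [local instance] Classical.propDecidable

/-- `l : ℕ → ℕ` encodes a strict partition: the parts are `l 1 > l 2 > ⋯ > l ℓ > 0`
(indexed from `1`), with `l i = 0` for `i > ℓ` (and `l 0 = 0` by convention). -/
def IsStrictPartition (l : ℕ → ℕ) : Prop :=
  l 0 = 0 ∧ ∀ i, 1 ≤ i → (l i = 0 → l (i + 1) = 0) ∧ (l i ≠ 0 → l (i + 1) < l i)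

/-- The shifted diagram of type B: cells `(i,j)` with `1 ≤ i ≤ ℓ(λ)` and
`i ≤ j ≤ λ_i + i - 1`.  (For a strict partition all such cells satisfy
`i ≤ l 1` and `j ≤ 2 * l 1 + 2`, so the ambient box loses nothing.) -/
noncomputable def cellsB (l : ℕ → ℕ) : Finset (ℕ × ℕ) :=
  (Finset.Icc 1 (l 1) ×ˢ Finset.Icc 1 (2 * l 1 + 2)).filter
    (fun p => p.1 ≤ p.2 ∧ p.2 < l p.1 + p.1)

/-- The shifted diagram of type D: cells `(i,j)` with `1 ≤ i ≤ ℓ(λ)` and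
`i + 1 ≤ j ≤ λ_i + i`. -/
noncomputable def cellsD (l : ℕ → ℕ) : Finset (ℕ × ℕ) :=
  (Finset.Icc 1 (l 1) ×ˢ Finset.Icc 1 (2 * l 1 + 2)).filter
    (fun p => p.1 < p.2 ∧ p.2 ≤ l p.1 + p.1)

/-- `λ'_k`: the number of cells of `[λ]^B` in column `k`. -/
noncomputable def colB (l : ℕ → ℕ) (k : ℕ) : ℕ :=
  ((cellsB l).filter (fun p => p.2 = k)).card

/-- The size `|λ|` of a strict partition. -/
noncomputable def spSize (l : ℕ → ℕ) : ℕ := ∑ i ∈ Finset.Icc 1 (l 1), l i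

/-- The length `ℓ(λ)` (number of nonzero parts) of a strict partition. -/
noncomputable def spLength (l : ℕ → ℕ) : ℕ :=
  ((Finset.Icc 1 (l 1)).filter (fun i => l i ≠ 0)).card

/-- `μ ⋖ ν` for strict partitions (containment via type B diagrams and `|ν| = |μ| + 1`). -/
def CoversB (m n : ℕ → ℕ) : Prop :=
  cellsB m ⊆ cellsB n ∧ spSize n = spSize m + 1

/-- `μ ⋖ ν` for strict partitions (containment via type D diagrams and `|ν| = |μ| + 1`). -/
def CoversD (m n : ℕ → ℕ) : Prop :=
  cellsD m ⊆ cellsD n ∧ spSize n = spSize m + 1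

/-- An excited move of type B with respect to `λ`. -/
def ExcitedMoveB (l : ℕ → ℕ) (D D' : Finset (ℕ × ℕ)) : Prop :=
  ∃ i j : ℕ, (i, j) ∈ D ∧
    (i + 1, j) ∈ cellsB l ∧ (i + 1, j) ∉ D ∧
    (i, j + 1) ∈ cellsB l ∧ (i, j + 1) ∉ D ∧
    (i + 1, j + 1) ∈ cellsB l ∧ (i + 1, j + 1) ∉ D ∧
    D' = insert (i + 1, j + 1) (D.erase (i, j))

/-- The excited diagrams of type B of shape `λ/μ`: subsets of `[λ]^B` obtainable from
`[μ]^B` by finite sequences of excited moves of type B. -/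
noncomputable def EB (l m : ℕ → ℕ) : Finset (Finset (ℕ × ℕ)) :=
  (cellsB l).powerset.filter
    (fun D => Relation.ReflTransGen (ExcitedMoveB l) (cellsB m) D)

/-- An excited move of type D with respect to `λ`. -/
def ExcitedMoveD (l : ℕ → ℕ) (D D' : Finset (ℕ × ℕ)) : Prop :=
  (∃ i j : ℕ, i + 1 < j ∧ (i, j) ∈ D ∧
    (i + 1, j) ∈ cellsD l ∧ (i + 1, j) ∉ D ∧
    (i, j + 1) ∈ cellsD l ∧ (i, j + 1) ∉ D ∧
    (i + 1, j + 1) ∈ cellsD l ∧ (i + 1, j + 1) ∉ D ∧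
    D' = insert (i + 1, j + 1) (D.erase (i, j))) ∨
  (∃ i : ℕ, (i, i + 1) ∈ D ∧
    (i, i + 2) ∈ cellsD l ∧ (i, i + 2) ∉ D ∧
    (i, i + 3) ∈ cellsD l ∧ (i, i + 3) ∉ D ∧
    (i + 1, i + 2) ∈ cellsD l ∧ (i + 1, i + 2) ∉ D ∧
    (i + 1, i + 3) ∈ cellsD l ∧ (i + 1, i + 3) ∉ D ∧
    (i + 2, i + 3) ∈ cellsD l ∧ (i + 2, i + 3) ∉ D ∧
    D' = insert (i + 2, i + 3) (D.erase (i, i + 1)))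

/-- The excited diagrams of type D of shape `λ/μ`. -/
noncomputable def ED (l m : ℕ → ℕ) : Finset (Finset (ℕ × ℕ)) :=
  (cellsD l).powerset.filter
    (fun D => Relation.ReflTransGen (ExcitedMoveD l) (cellsD m) D)

/-- The set `W^B(μ, λ)`: all `1 ≤ k ≤ ℓ(λ)` with `λ_k ≠ μ_i` for all `i ≥ 1`, together
with all `k ≥ ℓ(λ) + 1` with `λ'_k - k ≠ μ'_i - i` for all `i ≥ 1`.  (All its elements
are at most `λ_1 + μ_1 + 2`, so the ambient interval loses nothing.) -/
noncomputable def WB (m l : ℕ → ℕ) : Finset ℕ :=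
  (Finset.Icc 1 (l 1 + m 1 + 2)).filter (fun k =>
    (k ≤ spLength l ∧ ∀ i, 1 ≤ i → l k ≠ m i) ∨
    (spLength l + 1 ≤ k ∧ ∀ i, 1 ≤ i → (colB l k : ℤ) - k ≠ (colB m i : ℤ) - i))

/-- The set `W^D(μ, λ)`. -/
noncomputable def WD (m l : ℕ → ℕ) : Finset ℕ :=
  (Finset.Icc 1 (l 1 + m 1 + 3)).filter (fun k =>
    (k ≤ spLength l ∧ ∀ i, 1 ≤ i → l k ≠ m i) ∨
    (k = spLength l + 1 ∧ Odd ((spLength l : ℤ) - (spLength m : ℤ))) ∨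
    (spLength l + 2 ≤ k ∧ ∀ i, 1 ≤ i → (colB l k : ℤ) - k ≠ (colB m i : ℤ) - i))

/-- The type B hook length of a cell of `[λ]^B`. -/
noncomputable def hB (l : ℕ → ℕ) (p : ℕ × ℕ) : ℤ :=
  if p.1 = p.2 then (l p.1 : ℤ)
  else if p.2 ≤ spLength l then (l p.1 : ℤ) + (l p.2 : ℤ)
  else ((l p.1 : ℤ) + (p.1 : ℤ) - (p.2 : ℤ)) + ((colB l p.2 : ℤ) - (p.1 : ℤ))

/-- The type D hook length of a cell of `[λ]^D`. -/
noncomputable def hD (l : ℕ → ℕ) (p : ℕ × ℕ) : ℤ :=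
  if p.2 ≤ spLength l then (l p.1 : ℤ) + (l p.2 : ℤ)
  else ((l p.1 : ℤ) + (p.1 : ℤ) - (p.2 : ℤ) + 1) + ((colB l (p.2 - 1) : ℤ) - (p.1 : ℤ))

/-- A standard Young tableau on a finite set of cells, encoded as `T : ℕ × ℕ → ℕ`
which is `0` off the cells and restricts to a bijection onto `{1, …, n}`,
increasing along rows and columns. -/
def IsSYT (cells : Finset (ℕ × ℕ)) (T : ℕ × ℕ → ℕ) : Prop :=
  Set.BijOn T ↑cells ↑(Finset.Icc 1 cells.card) ∧
  (∀ p, p ∉ cells → T p = 0) ∧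
  (∀ i j : ℕ, (i, j) ∈ cells → (i, j + 1) ∈ cells → T (i, j) < T (i, j + 1)) ∧
  (∀ i j : ℕ, (i, j) ∈ cells → (i + 1, j) ∈ cells → T (i, j) < T (i + 1, j))

/-- The skew diagram `[λ]^B ∖ [μ]^B`. -/
noncomputable def skewB (l m : ℕ → ℕ) : Finset (ℕ × ℕ) := cellsB l \ cellsB m

/-- The skew diagram `[λ]^D ∖ [μ]^D`. -/
noncomputable def skewD (l m : ℕ → ℕ) : Finset (ℕ × ℕ) := cellsD l \ cellsD m

/-- `f^{λ/μ}`: the number of standard Young tableaux of shifted skew shape `λ/μ`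
(type B diagrams). -/
noncomputable def fB (l m : ℕ → ℕ) : ℕ :=
  Nat.card {T : ℕ × ℕ → ℕ // IsSYT (skewB l m) T}

/-- `f^{λ/μ}` via the type D diagrams. -/
noncomputable def fD (l m : ℕ → ℕ) : ℕ :=
  Nat.card {T : ℕ × ℕ → ℕ // IsSYT (skewD l m) T}

/-- `x_k^B = λ_k` for `k ≤ ℓ(λ)` and `x_k^B = λ'_k - k` for `k > ℓ(λ)`. -/
noncomputable def xB (l : ℕ → ℕ) (k : ℕ) : ℤ :=
  if k ≤ spLength l then (l k : ℤ) else (colB l k : ℤ) - (k : ℤ)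

/-- `x_k^D = λ_k` for `k ≤ ℓ(λ)` and `x_k^D = λ'_{k-1} - k + 1` for `k > ℓ(λ)`. -/
noncomputable def xD (l : ℕ → ℕ) (k : ℕ) : ℤ :=
  if k ≤ spLength l then (l k : ℤ) else (colB l (k - 1) : ℤ) - (k : ℤ) + 1

/-- The weighted type B hook length `h^B(u; z)`: the sum of `z_{c(v)}` over the cells `v`
of the type B hook of `u` (the diagonal cell `(j,j)` counted twice when `i < j ≤ ℓ(λ)`). -/
noncomputable def hBz (l : ℕ → ℕ) (z : ℕ → ℝ) (u : ℕ × ℕ) : ℝ :=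
  (∑ p ∈ (cellsB l).filter (fun p => p.1 = u.1 ∧ u.2 ≤ p.2), z (p.2 - p.1)) +
  (∑ p ∈ (cellsB l).filter (fun p => p.2 = u.2 ∧ u.1 < p.1), z (p.2 - p.1)) +
  (if u.1 < u.2 ∧ u.2 ≤ spLength l then
      ∑ p ∈ (cellsB l).filter (fun p => p.1 = u.2), z (p.2 - p.1)
    else 0)

/-- The weighted type D hook length `h^D(u; z)`. -/
noncomputable def hDz (l : ℕ → ℕ) (z : ℕ → ℝ) (u : ℕ × ℕ) : ℝ :=
  (∑ p ∈ (cellsD l).filter (fun p => p.1 = u.1 ∧ u.2 ≤ p.2), z (p.2 - p.1)) +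
  (∑ p ∈ (cellsD l).filter (fun p => p.2 = u.2 ∧ u.1 < p.1), z (p.2 - p.1)) +
  (∑ p ∈ (cellsD l).filter (fun p => p.1 = u.2), z (p.2 - p.1))

/-- The weight `T_z` of a standard Young tableau `T` on `cells` (with `n = |cells|`):
`∏_{k=1}^n (z_{c(T⁻¹(n))} + ⋯ + z_{c(T⁻¹(k))})⁻¹`. -/
noncomputable def Tz (cells : Finset (ℕ × ℕ)) (z : ℕ → ℝ) (T : ℕ × ℕ → ℕ) : ℝ :=
  ∏ k ∈ Finset.Icc 1 cells.card,
    (∑ p ∈ cells.filter (fun p => k ≤ T p), z (p.2 - p.1))⁻¹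

/-- `x_k^B(z) = z_0 + ⋯ + z_{λ_k - 1}` for `k ≤ ℓ(λ)`, and
`x_k^B(z) = -(z_0 + ⋯ + z_{k - λ'_k - 1})` for `k > ℓ(λ)`. -/
noncomputable def xBz (l : ℕ → ℕ) (z : ℕ → ℝ) (k : ℕ) : ℝ :=
  if k ≤ spLength l then ∑ t ∈ Finset.range (l k), z t
  else -∑ t ∈ Finset.range (k - colB l k), z t


section Aux

variable {l : ℕ → ℕ}

lemma sp_step (hl : IsStrictPartition l) :
    ∀ k i, 1 ≤ i → l (i + k) ≠ 0 → l (i + k) + k ≤ l i := by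
  intro k
  induction k with
  | zero => intro i _ _; simp
  | succ n ih =>
    intro i hi hne
    have h1 : l (i + n) ≠ 0 := by
      intro h0
      exact hne (by simpa [Nat.add_assoc] using (hl.2 (i + n) (by omega)).1 h0)
    have h2 : l (i + n + 1) < l (i + n) := (hl.2 (i + n) (by omega)).2 h1
    have h3 := ih i hi h1
    have : i + (n + 1) = i + n + 1 := by omega
    rw [this]
    omega

lemma sp_le (hl : IsStrictPartition l) {i j : ℕ} (hi : 1 ≤ i) (hij : i ≤ j)
    (hne : l j ≠ 0) : l j + (j - i) ≤ l i := by
  have := sp_step hl (j - i) i hi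
  rw [Nat.add_sub_cancel' hij] at this
  exact this hne

lemma sp_le_l1 (hl : IsStrictPartition l) {j : ℕ} (hj : 1 ≤ j) (hne : l j ≠ 0) :
    j ≤ l 1 ∧ l j + j ≤ l 1 + 1 := by
  have h := sp_le hl (le_refl 1) hj hne
  have : l j ≠ 0 := hne
  omega

lemma sp_len_iff (hl : IsStrictPartition l) :
    ∀ i, 1 ≤ i → (i ≤ spLength l ↔ l i ≠ 0) := by
  classical
  set N := Nat.findGreatest (fun i => l i ≠ 0) (l 1) with hN
  have hNle : N ≤ l 1 := Nat.findGreatest_le _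
  have hdown : ∀ i j, 1 ≤ i → i ≤ j → l j ≠ 0 → l i ≠ 0 := by
    intro i j hi hij hne
    have := sp_le hl hi hij hne
    omega
  have hmemN : ∀ i, 1 ≤ i → (l i ≠ 0 ↔ i ≤ N) := by
    intro i hi
    constructor
    · intro hne
      by_contra hcon
      have hile : i ≤ l 1 := (sp_le_l1 hl hi hne).1
      exact Nat.findGreatest_is_greatest (P := fun i => l i ≠ 0) (by omega) hile hne
    · intro hiN
      have hN0 : N ≠ 0 := by omega
      have hwit : ¬ ∀ m, 0 < m → m ≤ l 1 → ¬ (l m ≠ 0) := by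
        intro hall
        exact hN0 (Nat.findGreatest_eq_zero_iff.2 fun {m} hm hmle => hall m hm hmle)
      push_neg at hwit
      obtain ⟨m, hm0, hmle, hmne⟩ := hwit
      have hNne : l N ≠ 0 := Nat.findGreatest_spec (P := fun i => l i ≠ 0) hmle hmne
      exact hdown i N hi hiN hNne
  have hset : (Finset.Icc 1 (l 1)).filter (fun i => l i ≠ 0) = Finset.Icc 1 N := by
    ext i
    simp only [Finset.mem_filter, Finset.mem_Icc]
    constructor
    · rintro ⟨⟨h1, _⟩, hne⟩
      exact ⟨h1, (hmemN i h1).1 hne⟩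
    · rintro ⟨h1, h2⟩
      have hne := (hmemN i h1).2 h2
      exact ⟨⟨h1, (sp_le_l1 hl h1 hne).1⟩, hne⟩
  have hL : spLength l = N := by
    rw [spLength]
    rw [hset, Nat.card_Icc]
    omega
  intro i hi
  rw [hL]
  exact (hmemN i hi).symm

lemma mem_cellsB_iff (hl : IsStrictPartition l) {i j : ℕ} :
    (i, j) ∈ cellsB l ↔ 1 ≤ i ∧ i ≤ j ∧ j < l i + i := by
  simp only [cellsB, Finset.mem_filter, Finset.mem_product, Finset.mem_Icc]
  constructor
  · rintro ⟨⟨⟨h1, _⟩, _⟩, h4, h5⟩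
    exact ⟨h1, h4, h5⟩
  · rintro ⟨h1, h2, h3⟩
    have hne : l i ≠ 0 := by omega
    have hb := sp_le_l1 hl h1 hne
    exact ⟨⟨⟨h1, by omega⟩, by omega, by omega⟩, h2, h3⟩

lemma mem_cellsD_iff (hl : IsStrictPartition l) {i j : ℕ} :
    (i, j) ∈ cellsD l ↔ 1 ≤ i ∧ i < j ∧ j ≤ l i + i := by
  simp only [cellsD, Finset.mem_filter, Finset.mem_product, Finset.mem_Icc]
  constructor
  · rintro ⟨⟨⟨h1, _⟩, _⟩, h4, h5⟩
    exact ⟨h1, h4, h5⟩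
  · rintro ⟨h1, h2, h3⟩
    have hne : l i ≠ 0 := by omega
    have hb := sp_le_l1 hl h1 hne
    exact ⟨⟨⟨h1, by omega⟩, by omega, by omega⟩, h2, h3⟩

lemma sp_ge (hl : IsStrictPartition l) {i : ℕ} (hi : 1 ≤ i) (hiL : i ≤ spLength l) :
    spLength l + 1 ≤ l i + i := by
  have hLne : l (spLength l) ≠ 0 := (sp_len_iff hl _ (by omega)).1 (le_refl _)
  have := sp_le hl hi hiL hLne
  omega

lemma colB_len (hl : IsStrictPartition l) (hL : 1 ≤ spLength l) :
    colB l (spLength l) = spLength l := by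
  have hset : (cellsB l).filter (fun p => p.2 = spLength l) =
      (Finset.Icc 1 (spLength l)).image (fun i => (i, spLength l)) := by
    ext ⟨a, b⟩
    simp only [Finset.mem_filter, Finset.mem_image, Finset.mem_Icc, mem_cellsB_iff hl,
      Prod.mk.injEq]
    constructor
    · rintro ⟨⟨h1, h2, h3⟩, h4⟩
      exact ⟨a, ⟨h1, by omega⟩, rfl, h4.symm⟩
    · rintro ⟨x, ⟨hx1, hx2⟩, rfl, rfl⟩
      have := sp_ge hl hx1 hx2
      exact ⟨⟨hx1, by omega, by omega⟩, rfl⟩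
  rw [colB, hset, Finset.card_image_of_injective _ (fun x y h => by
    simpa using congrArg Prod.fst h), Nat.card_Icc]
  omega

/-- The hook-preserving bijection from `[λ]^B` to `[λ]^D`. -/
noncomputable def phiBD (l : ℕ → ℕ) (p : ℕ × ℕ) : ℕ × ℕ :=
  if p.2 ≤ spLength l then
    (if p.1 = p.2 then (p.1, spLength l + 1) else p)
  else (p.1, p.2 + 1)

end Aux

/-- The multiset of type B hook lengths of `λ` equals the multiset of type D hook lengths. -/
theorem statement14 (l : ℕ → ℕ) (hl : IsStrictPartition l) :
    Multiset.map (hB l) (cellsB l).val = Multiset.map (hD l) (cellsD l).val := by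
  classical
  have himg : cellsD l = (cellsB l).image (phiBD l) := by
    ext ⟨a, b⟩
    constructor
    · intro hq
      rw [mem_cellsD_iff hl] at hq
      obtain ⟨h1, h2, h3⟩ := hq
      rw [Finset.mem_image]
      rcases lt_trichotomy b (spLength l + 1) with hb | hb | hb
      · have hge := sp_ge hl h1 (by omega : a ≤ spLength l)
        refine ⟨(a, b), (mem_cellsB_iff hl).2 ⟨h1, by omega, by omega⟩, ?_⟩
        simp only [phiBD]
        rw [if_pos (by omega : b ≤ spLength l), if_neg (by omega : ¬ a = b)]
      · have hane : l a ≠ 0 := by omega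
        have haL : a ≤ spLength l := (sp_len_iff hl a h1).2 hane
        refine ⟨(a, a), (mem_cellsB_iff hl).2 ⟨h1, le_refl a, by omega⟩, ?_⟩
        simp only [phiBD]
        simp [haL, hb]
      · refine ⟨(a, b - 1), (mem_cellsB_iff hl).2 ⟨h1, by omega, by omega⟩, ?_⟩
        simp only [phiBD]
        rw [if_neg (by omega : ¬ b - 1 ≤ spLength l)]
        have : b - 1 + 1 = b := by omega
        rw [this]
    · intro hq
      rw [Finset.mem_image] at hq
      obtain ⟨⟨a', b'⟩, hmem, heq⟩ := hq
      rw [mem_cellsB_iff hl] at hmem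
      obtain ⟨h1, h2, h3⟩ := hmem
      rw [← heq]
      simp only [phiBD]
      split_ifs with hb' hd
      · rw [mem_cellsD_iff hl]
        have := sp_ge hl h1 (by omega : a' ≤ spLength l)
        exact ⟨h1, by omega, by omega⟩
      · rw [mem_cellsD_iff hl]
        exact ⟨h1, by omega, by omega⟩
      · rw [mem_cellsD_iff hl]
        exact ⟨h1, by omega, by omega⟩
  have hinj : Set.InjOn (phiBD l) ↑(cellsB l) := by
    rintro ⟨a, b⟩ hp ⟨c, d⟩ hq h
    simp only [Finset.mem_coe, mem_cellsB_iff hl] at hp hq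
    simp only [phiBD] at h
    split_ifs at h with h1 h2 h3 h4 h5 h6 h7 h8 <;>
      simp only [Prod.mk.injEq] at h ⊢ <;> omega
  have key : ∀ p ∈ cellsB l, hD l (phiBD l p) = hB l p := by
    rintro ⟨a, b⟩ hp
    rw [mem_cellsB_iff hl] at hp
    obtain ⟨h1, h2, h3⟩ := hp
    by_cases hbL : b ≤ spLength l
    · by_cases hab : a = b
      · have hcol : colB l (spLength l) = spLength l := colB_len hl (by omega)
        subst hab
        have hphi : phiBD l (a, a) = (a, spLength l + 1) := by
          simp [phiBD, hbL]
        rw [hphi]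
        simp only [hD, hB]
        rw [if_neg (by omega : ¬ spLength l + 1 ≤ spLength l)]
        simp only [if_true, ite_true]
        have h4 : spLength l + 1 - 1 = spLength l := by omega
        rw [h4, hcol]
        push_cast
        ring
      · have hphi : phiBD l (a, b) = (a, b) := by
          simp [phiBD, hbL, hab]
        rw [hphi]
        simp only [hD, hB]
        rw [if_pos (hbL : (a, b).2 ≤ spLength l), if_neg hab,
          if_pos (hbL : (a, b).2 ≤ spLength l)]
    · have hane : l a ≠ 0 := by omega
      have haL : a ≤ spLength l := (sp_len_iff hl a h1).2 hane
      have hphi : phiBD l (a, b) = (a, b + 1) := by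
        simp [phiBD, hbL]
      rw [hphi]
      simp only [hD, hB]
      rw [if_neg (by omega : ¬ (a, b + 1).2 ≤ spLength l),
        if_neg (by omega : ¬ (a, b).1 = (a, b).2), if_neg hbL]
      have h4 : b + 1 - 1 = b := by omega
      rw [h4]
      push_cast
      ring
  calc Multiset.map (hB l) (cellsB l).val
      = Multiset.map (hD l ∘ phiBD l) (cellsB l).val :=
        Multiset.map_congr rfl (fun p hp => (key p hp).symm)
    _ = Multiset.map (hD l) (Multiset.map (phiBD l) (cellsB l).val) := by
        rw [Multiset.map_map]
    _ = Multiset.map (hD l) (cellsD l).val := by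
        rw [himg, Finset.image_val_of_injOn hinj]
end

section
/- (Weighted hook lengths factor through content partial sums, type B.) Let λ be a strict partition and let z_0, z_1, z_2, … be real numbers. Define x_k^B(z) = z_0 + z_1 + ⋯ + z_{λ_k − 1} for 1 ≤ k ≤ ℓ(λ), and x_k^B(z) = −(z_0 + z_1 + ⋯ + z_{k − λ'_k − 1}) for k > ℓ(λ). Then h^B(i,i; z) = x_i^B(z) for every diagonal cell (i,i) ∈ [λ]^B, and h^B(i,j; z) = x_i^B(z) + x_j^B(z) for every cell (i,j) ∈ [λ]^B with i < j. -/
attribute [local instance] Classical.propDecidable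

section Aux

variable {l : ℕ → ℕ}

lemma sp_mono (hl : IsStrictPartition l) :
    ∀ b a, 1 ≤ a → a ≤ b → l b ≠ 0 → l b + (b - a) ≤ l a := by
  intro b
  induction b with
  | zero => intro a h1 h2 _; omega
  | succ b ih =>
    intro a h1 h2 h3
    rcases Nat.lt_or_ge a (b + 1) with h | h
    · have hab : a ≤ b := by omega
      have hb1 : 1 ≤ b := by omega
      have hlb : l b ≠ 0 := fun h0 => h3 ((hl.2 b hb1).1 h0)
      have hlt := (hl.2 b hb1).2 hlb
      have := ih a h1 hab hlb
      omega
    · have : a = b + 1 := by omega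
      subst this; omega

lemma sp_zero (hl : IsStrictPartition l) :
    ∀ b a, 1 ≤ a → a ≤ b → l a = 0 → l b = 0 := by
  intro b
  induction b with
  | zero => intro a h1 h2 _; omega
  | succ b ih =>
    intro a h1 h2 h0
    rcases Nat.lt_or_ge a (b + 1) with h | h
    · exact (hl.2 b (by omega)).1 (ih a h1 (by omega) h0)
    · have : a = b + 1 := by omega
      exact this ▸ h0

lemma le_spLength_iff (hl : IsStrictPartition l) (k : ℕ) :
    l k ≠ 0 ↔ 1 ≤ k ∧ k ≤ spLength l := by
  constructor
  · intro hk
    have hk1 : 1 ≤ k := by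
      by_contra h
      have hk0 : k = 0 := by omega
      exact hk (hk0 ▸ hl.1)
    refine ⟨hk1, ?_⟩
    have hsub : Finset.Icc 1 k ⊆ (Finset.Icc 1 (l 1)).filter (fun i => l i ≠ 0) := by
      intro i hi
      rw [Finset.mem_Icc] at hi
      have hli : l i ≠ 0 := fun h0 => hk (sp_zero hl k i hi.1 hi.2 h0)
      have := sp_mono hl i 1 le_rfl hi.1 hli
      exact Finset.mem_filter.mpr ⟨Finset.mem_Icc.mpr ⟨hi.1, by omega⟩, hli⟩
    have := Finset.card_le_card hsub
    simpa [spLength] using this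
  · rintro ⟨h1, h2⟩ h0
    have hsub : (Finset.Icc 1 (l 1)).filter (fun i => l i ≠ 0) ⊆ Finset.Icc 1 (k - 1) := by
      intro i hi
      rw [Finset.mem_filter, Finset.mem_Icc] at hi
      rw [Finset.mem_Icc]
      refine ⟨hi.1.1, ?_⟩
      by_contra h
      exact hi.2 (sp_zero hl i k h1 (by omega) h0)
    have hc := Finset.card_le_card hsub
    rw [Nat.card_Icc] at hc
    unfold spLength at h2
    omega

lemma mem_cellsB (hl : IsStrictPartition l) (i j : ℕ) :
    (i, j) ∈ cellsB l ↔ 1 ≤ i ∧ i ≤ j ∧ j < l i + i := by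
  unfold cellsB
  simp only [Finset.mem_filter, Finset.mem_product, Finset.mem_Icc]
  constructor
  · rintro ⟨⟨⟨h1, _⟩, _⟩, h3, h4⟩; exact ⟨h1, h3, h4⟩
  · rintro ⟨h1, h2, h3⟩
    have hli : l i ≠ 0 := by omega
    have := sp_mono hl i 1 le_rfl h1 hli
    exact ⟨⟨⟨h1, by omega⟩, by omega, by omega⟩, h2, h3⟩

lemma dc_eq_Icc (S : Finset ℕ) (h0 : 0 ∉ S)
    (hdc : ∀ a b, a ∈ S → 1 ≤ b → b ≤ a → b ∈ S) :
    S = Finset.Icc 1 S.card := by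
  ext a
  simp only [Finset.mem_Icc]
  constructor
  · intro ha
    have ha1 : 1 ≤ a := by
      rcases Nat.eq_zero_or_pos a with h | h
      · exact absurd (h ▸ ha) h0
      · exact h
    refine ⟨ha1, ?_⟩
    have hsub : Finset.Icc 1 a ⊆ S := fun b hb =>
      hdc a b ha (Finset.mem_Icc.mp hb).1 (Finset.mem_Icc.mp hb).2
    calc a = (Finset.Icc 1 a).card := by simp
      _ ≤ S.card := Finset.card_le_card hsub
  · rintro ⟨h1, h2⟩
    have hne : S.Nonempty := Finset.card_pos.mp (by omega)
    have hm := S.max'_mem hne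
    have hsub : S ⊆ Finset.Icc 1 (S.max' hne) := by
      intro b hb
      refine Finset.mem_Icc.mpr ⟨?_, S.le_max' b hb⟩
      rcases Nat.eq_zero_or_pos b with h | h
      · exact absurd (h ▸ hb) h0
      · exact h
    have hcard : S.card ≤ S.max' hne :=
      le_trans (Finset.card_le_card hsub) (by simp)
    exact hdc _ a hm h1 (le_trans h2 hcard)

/-- The set of row indices of column `j`. -/
noncomputable def Scol (l : ℕ → ℕ) (j : ℕ) : Finset ℕ :=
  (Finset.Icc 1 j).filter (fun a => j < l a + a)

lemma col_filter_eq (hl : IsStrictPartition l) (j : ℕ) :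
    (cellsB l).filter (fun p => p.2 = j) = (Scol l j).image (fun a => (a, j)) := by
  ext p
  obtain ⟨a, b⟩ := p
  rw [Finset.mem_filter, Finset.mem_image]
  simp only [Scol, Finset.mem_filter, Finset.mem_Icc]
  constructor
  · rintro ⟨hp, hpj⟩
    subst hpj
    rw [mem_cellsB hl] at hp
    exact ⟨a, ⟨⟨hp.1, hp.2.1⟩, hp.2.2⟩, rfl⟩
  · rintro ⟨c, ⟨⟨hc1, hc2⟩, hc3⟩, hceq⟩
    simp only [Prod.mk.injEq] at hceq
    obtain ⟨rfl, rfl⟩ := hceq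
    exact ⟨(mem_cellsB hl c j).mpr ⟨hc1, hc2, hc3⟩, rfl⟩

lemma Scol_dc (hl : IsStrictPartition l) (j : ℕ) :
    Scol l j = Finset.Icc 1 (Scol l j).card := by
  apply dc_eq_Icc
  · simp [Scol]
  · intro a b ha h1 hba
    rw [Scol, Finset.mem_filter, Finset.mem_Icc] at ha ⊢
    have hla : l a ≠ 0 := by omega
    have := sp_mono hl a b h1 hba hla
    exact ⟨⟨h1, by omega⟩, by omega⟩

lemma colB_eq_card (hl : IsStrictPartition l) (j : ℕ) :
    colB l j = (Scol l j).card := by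
  rw [colB, col_filter_eq hl, Finset.card_image_of_injective]
  intro a b h
  simpa using h

lemma mem_Scol_iff (hl : IsStrictPartition l) (j a : ℕ) :
    a ∈ Scol l j ↔ 1 ≤ a ∧ a ≤ colB l j := by
  rw [colB_eq_card hl]
  conv_lhs => rw [Scol_dc hl]
  exact Finset.mem_Icc

lemma colB_le (hl : IsStrictPartition l) (j : ℕ) : colB l j ≤ j := by
  rw [colB_eq_card hl]
  calc (Scol l j).card ≤ (Finset.Icc 1 j).card := Finset.card_le_card (Finset.filter_subset _ _)
    _ = j := by simp

lemma colB_le_spLength (hl : IsStrictPartition l) (j : ℕ) :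
    colB l j ≤ spLength l := by
  rcases Nat.eq_zero_or_pos (colB l j) with h | h
  · omega
  · have hmem : colB l j ∈ Scol l j := (mem_Scol_iff hl j _).mpr ⟨h, le_rfl⟩
    rw [Scol, Finset.mem_filter, Finset.mem_Icc] at hmem
    have hne : l (colB l j) ≠ 0 := by omega
    exact ((le_spLength_iff hl _).mp hne).2

lemma colB_eq_self (hl : IsStrictPartition l) (j : ℕ) (h1 : 1 ≤ j) (h2 : j ≤ spLength l) :
    colB l j = j := by
  have hSeq : Scol l j = Finset.Icc 1 j := by
    rw [Scol, Finset.filter_true_of_mem]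
    intro a ha
    rw [Finset.mem_Icc] at ha
    have hlj : l j ≠ 0 := (le_spLength_iff hl j).mpr ⟨h1, h2⟩
    have := sp_mono hl j a ha.1 ha.2 hlj
    omega
  rw [colB_eq_card hl, hSeq]
  simp

lemma row_sum (hl : IsStrictPartition l) (z : ℕ → ℝ) (i c : ℕ) (h1 : 1 ≤ i) (hic : i ≤ c) :
    ∑ p ∈ (cellsB l).filter (fun p => p.1 = i ∧ c ≤ p.2), z (p.2 - p.1)
      = ∑ t ∈ Finset.Ico (c - i) (l i), z t := by
  refine Finset.sum_nbij' (fun p => p.2 - p.1) (fun t => (i, t + i)) ?_ ?_ ?_ ?_ ?_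
  · rintro ⟨a, b⟩ hp
    rw [Finset.mem_filter, mem_cellsB hl] at hp
    simp only at hp
    obtain ⟨hcell, ha, hb⟩ := hp
    subst ha
    simp only [Finset.mem_Ico]
    omega
  · intro t ht
    rw [Finset.mem_Ico] at ht
    simp only [Finset.mem_filter, mem_cellsB hl, true_and, and_true, eq_self_iff_true]
    omega
  · rintro ⟨a, b⟩ hp
    rw [Finset.mem_filter, mem_cellsB hl] at hp
    simp only at hp
    obtain ⟨hcell, ha, hb⟩ := hp
    subst ha
    simp only [Prod.mk.injEq, true_and, and_true, eq_self_iff_true]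
    omega
  · intro t ht
    rw [Finset.mem_Ico] at ht
    simp only
    omega
  · rintro ⟨a, b⟩ hp
    rfl

lemma leg_sum (hl : IsStrictPartition l) (z : ℕ → ℝ) (i j : ℕ) (hij : i < j) :
    ∑ p ∈ (cellsB l).filter (fun p => p.2 = j ∧ i < p.1), z (p.2 - p.1)
      = ∑ t ∈ Finset.Ico (j - colB l j) (j - i), z t := by
  have hcj : colB l j ≤ j := colB_le hl j
  refine Finset.sum_nbij' (fun p => j - p.1) (fun t => (j - t, j)) ?_ ?_ ?_ ?_ ?_
  · rintro ⟨a, b⟩ hp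
    rw [Finset.mem_filter, mem_cellsB hl] at hp
    simp only at hp
    obtain ⟨hcell, hb, ha⟩ := hp
    subst hb
    have hmem : a ∈ Scol l b := by
      rw [Scol, Finset.mem_filter, Finset.mem_Icc]
      omega
    rw [mem_Scol_iff hl] at hmem
    simp only [Finset.mem_Ico]
    omega
  · intro t ht
    rw [Finset.mem_Ico] at ht
    have hmem : j - t ∈ Scol l j := by
      rw [mem_Scol_iff hl]
      omega
    rw [Scol, Finset.mem_filter, Finset.mem_Icc] at hmem
    simp only [Finset.mem_filter, mem_cellsB hl, true_and, and_true, eq_self_iff_true]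
    omega
  · rintro ⟨a, b⟩ hp
    rw [Finset.mem_filter, mem_cellsB hl] at hp
    simp only at hp
    obtain ⟨hcell, hb, ha⟩ := hp
    subst hb
    simp only [Prod.mk.injEq, true_and, and_true, eq_self_iff_true]
    omega
  · intro t ht
    rw [Finset.mem_Ico] at ht
    simp only
    omega
  · rintro ⟨a, b⟩ hp
    rw [Finset.mem_filter] at hp
    simp only at hp ⊢
    rw [hp.2.1]

lemma row_sum_full (hl : IsStrictPartition l) (z : ℕ → ℝ) (j : ℕ) (h1 : 1 ≤ j) :
    ∑ p ∈ (cellsB l).filter (fun p => p.1 = j), z (p.2 - p.1)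
      = ∑ t ∈ Finset.range (l j), z t := by
  have heq : (cellsB l).filter (fun p => p.1 = j)
      = (cellsB l).filter (fun p => p.1 = j ∧ j ≤ p.2) := by
    apply Finset.filter_congr
    rintro ⟨a, b⟩ hp
    rw [mem_cellsB hl] at hp
    simp only
    constructor
    · rintro rfl; exact ⟨rfl, hp.2.1⟩
    · rintro ⟨rfl, _⟩; rfl
  rw [heq, row_sum hl z j j h1 le_rfl, Finset.range_eq_Ico, Nat.sub_self]

end Aux

/-- Weighted hook lengths factor through content partial sums, type B:
`h^B(i,i;z) = x_i^B(z)` and `h^B(i,j;z) = x_i^B(z) + x_j^B(z)` for `i < j`. -/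
theorem statement19 (l : ℕ → ℕ) (hl : IsStrictPartition l) (z : ℕ → ℝ) :
    (∀ i : ℕ, (i, i) ∈ cellsB l → hBz l z (i, i) = xBz l z i) ∧
    (∀ i j : ℕ, (i, j) ∈ cellsB l → i < j → hBz l z (i, j) = xBz l z i + xBz l z j) := by
  constructor
  · intro i hi
    rw [mem_cellsB hl] at hi
    have hLi : i ≤ spLength l := ((le_spLength_iff hl i).mp (by omega)).2
    have hleg : (cellsB l).filter (fun p => p.2 = (i, i).2 ∧ (i, i).1 < p.1) = ∅ := by
      apply Finset.filter_false_of_mem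
      rintro ⟨a, b⟩ hp
      rw [mem_cellsB hl] at hp
      simp only
      rintro ⟨rfl, hlt⟩
      omega
    simp only [hBz, hleg, Finset.sum_empty, add_zero]
    rw [if_neg (by simp)]
    have harm := row_sum hl z i i hi.1 le_rfl
    rw [harm, xBz, if_pos hLi, Finset.range_eq_Ico, add_zero, Nat.sub_self]
  · intro i j hij hlt
    rw [mem_cellsB hl] at hij
    obtain ⟨h1i, hijle, hjlt⟩ := hij
    have hLi : i ≤ spLength l := ((le_spLength_iff hl i).mp (by omega)).2
    have harm := row_sum hl z i j h1i (le_of_lt hlt)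
    have hlegs := leg_sum hl z i j hlt
    have hxi : xBz l z i = ∑ t ∈ Finset.range (l i), z t := by
      rw [xBz, if_pos hLi]
    simp only [hBz]
    rw [harm, hlegs]
    by_cases hjL : j ≤ spLength l
    · have hcj : colB l j = j := colB_eq_self hl j (by omega) hjL
      rw [if_pos ⟨hlt, hjL⟩]
      have hthird := row_sum_full hl z j (by omega)
      rw [hthird]
      have hxj : xBz l z j = ∑ t ∈ Finset.range (l j), z t := by
        rw [xBz, if_pos hjL]
      rw [hxi, hxj, hcj]
      have hglue : ∑ t ∈ Finset.Ico (j - j) (j - i), z t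
            + ∑ t ∈ Finset.Ico (j - i) (l i), z t
          = ∑ t ∈ Finset.Ico 0 (l i), z t := by
        have h0 : j - j = 0 := by omega
        rw [h0]
        exact Finset.sum_Ico_consecutive _ (by omega) (by omega)
      simp only [Finset.range_eq_Ico, Nat.sub_self]
      rw [Nat.sub_self] at hglue
      linarith [hglue]
    · rw [if_neg (by tauto), add_zero]
      have hic : i ≤ colB l j := by
        have : i ∈ Scol l j := by
          rw [Scol, Finset.mem_filter, Finset.mem_Icc]
          exact ⟨⟨h1i, by omega⟩, by omega⟩
        exact ((mem_Scol_iff hl j i).mp this).2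
      have hxj : xBz l z j = -∑ t ∈ Finset.range (j - colB l j), z t := by
        rw [xBz, if_neg hjL]
      have hglue : ∑ t ∈ Finset.Ico 0 (j - colB l j), z t
            + ∑ t ∈ Finset.Ico (j - colB l j) (l i), z t
          = ∑ t ∈ Finset.Ico 0 (l i), z t :=
        Finset.sum_Ico_consecutive _ (by omega) (by omega)
      have hglue2 : ∑ t ∈ Finset.Ico (j - colB l j) (j - i), z t
            + ∑ t ∈ Finset.Ico (j - i) (l i), z t
          = ∑ t ∈ Finset.Ico (j - colB l j) (l i), z t :=
        Finset.sum_Ico_consecutive _ (by omega) (by omega)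
      rw [hxi, hxj]
      simp only [Finset.range_eq_Ico]
      linarith [hglue, hglue2]
end
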